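/- Let X be a compactum. The map n₁X : D₁X → A·X given by n₁X(f)(φ) = max{f(x)·φ(x) : x ∈ X} and the map s₁X : A·X → D₁X given by s₁X(μ)(x) = inf{μ(φ) : φ ∈ C(X,[0,1]) with φ(x) = 1} are well defined (n₁X(f) is a ·-measure for every f ∈ D₁X, and s₁X(μ) ∈ D₁X for every ·-measure μ) and mutually inverse: n₁X ∘ s₁X = id on A·X and s₁X ∘ n₁X = id on D₁X. -/

import Mathlib

/-- `C(X,[0,1])`: continuous real functions with values in `[0,1]`. -/
abbrev CI (X : Type*) [TopologicalSpace X] := {φ : C(X, ℝ) // ∀ x, 0 ≤ φ x ∧ φ x ≤ 1}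

/-- The constant function `1` as an element of `C(X,[0,1])`. -/
def CI.one (X : Type*) [TopologicalSpace X] : CI X :=
  ⟨1, fun x => by simp⟩

/-- Multiplication of `φ ∈ C(X,[0,1])` by a constant `l ∈ [0,1]`. -/
def CI.smul {X : Type*} [TopologicalSpace X] (l : ℝ) (hl : 0 ≤ l ∧ l ≤ 1) (φ : CI X) :
    CI X :=
  ⟨ContinuousMap.const X l * φ.1, fun x => by
    have h := φ.2 x
    simp only [ContinuousMap.mul_apply, ContinuousMap.const_apply]
    constructor <;> nlinarith [h.1, h.2, hl.1, hl.2]⟩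

/-- The pointwise maximum of `φ, ψ ∈ C(X,[0,1])`. -/
def CI.max {X : Type*} [TopologicalSpace X] (φ ψ : CI X) : CI X :=
  ⟨φ.1 ⊔ ψ.1, fun x => by
    have h1 := φ.2 x
    have h2 := ψ.2 x
    simp only [ContinuousMap.sup_apply]
    exact ⟨le_sup_of_le_left h1.1, sup_le h1.2 h2.2⟩⟩

/-- A `·`-measure on `X`: a functional on `C(X,[0,1])` with values in `[0,1]`,
normalized, homogeneous with respect to multiplication by constants in `[0,1]`,
and preserving finite maxima. -/
def IsDotMeasure {X : Type*} [TopologicalSpace X] (μ : CI X → ℝ) : Prop :=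
  (∀ φ, 0 ≤ μ φ ∧ μ φ ≤ 1) ∧
  μ (CI.one X) = 1 ∧
  (∀ (l : ℝ) (hl : 0 ≤ l ∧ l ≤ 1) (φ : CI X), μ (CI.smul l hl φ) = l * μ φ) ∧
  (∀ ψ φ : CI X, μ (CI.max ψ φ) = Max.max (μ ψ) (μ φ))

/-- Membership in `D₁X`: an upper semicontinuous function `X → [0,1]`
attaining the maximal value `1`. -/
def MemD1 {X : Type*} [TopologicalSpace X] (f : X → ℝ) : Prop :=
  UpperSemicontinuous f ∧ (∀ x, 0 ≤ f x ∧ f x ≤ 1) ∧ ∃ x, f x = 1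

/-- `s₁X(μ)(x) = inf{μ(φ) : φ ∈ C(X,[0,1]), φ(x) = 1}`. -/
noncomputable def s1Fun {X : Type*} [TopologicalSpace X] (μ : CI X → ℝ) (x : X) : ℝ :=
  ⨅ φ : {φ : CI X // φ.1 x = 1}, μ φ.1


/-! The key operation is the capped scaling `min(b·ψ, 1)`, whose measure is at most `b·μ(ψ)`:
by homogeneity for `b ≤ 1`, and for `b ≥ 1` by monotonicity, since `b⁻¹·min(b·ψ, 1) ≤ ψ`.
Taking `b = 1/φ(x)` gives `s₁(μ)(x)·φ(x) ≤ μ(φ)`. Conversely, if `s₁(μ)(x)·φ(x) < r`, a capped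
scaling dominates `φ` near `x` and has measure `< r`; by compactness finitely many of them cover
`X`, and since `μ` preserves maxima, `μ(φ) ≤ r`. Upper semicontinuity of `s₁(μ)` is the same local
statement for `φ = 1`, and `s₁(μ)` takes the value `1` because it attains its supremum `μ(1) = 1`.
Finally `s₁(n₁ f) = f` by Urysohn's lemma applied to the open set `{f < a}` and the point `x`. -/

open Filter Topology Set

section

variable {X : Type*} [TopologicalSpace X]

lemma exists_gt_gt_mul_lt {a b r : ℝ} (h : a * b < r) :
    ∃ a' b', a < a' ∧ b < b' ∧ a' * b' < r := by
  have hmul : ∀ᶠ p : ℝ × ℝ in 𝓝[>] a ×ˢ 𝓝[>] b, p.1 * p.2 < r :=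
    (Filter.prod_mono nhdsWithin_le_nhds nhdsWithin_le_nhds).trans_eq (nhds_prod_eq).symm
      ((continuous_mul.tendsto (a, b)).eventually_lt_const h)
  obtain ⟨⟨a', b'⟩, hab, ha, hb⟩ :=
    (hmul.and (Filter.prod_mem_prod self_mem_nhdsWithin self_mem_nhdsWithin)).exists
  exact ⟨a', b', ha, hb, hab⟩

lemma UpperSemicontinuous.mul_of_nonneg {f g : X → ℝ} (hf : UpperSemicontinuous f)
    (hg : UpperSemicontinuous g) (hf0 : ∀ x, 0 ≤ f x) (hg0 : ∀ x, 0 ≤ g x) :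
    UpperSemicontinuous (fun x => f x * g x) := by
  intro x r hr
  obtain ⟨a, b, ha, hb, hab⟩ := exists_gt_gt_mul_lt hr
  filter_upwards [hf x a ha, hg x b hb] with y hfy hgy
  calc f y * g y ≤ a * b :=
        mul_le_mul hfy.le hgy.le (hg0 y) ((hf0 x).trans ha.le)
    _ < r := hab

namespace CI

lemma one_apply (x : X) : (CI.one X).1 x = 1 := rfl

lemma smul_apply (l : ℝ) (hl : 0 ≤ l ∧ l ≤ 1) (φ : CI X) (x : X) :
    (CI.smul l hl φ).1 x = l * φ.1 x := rfl

lemma max_apply (φ ψ : CI X) (x : X) : (CI.max φ ψ).1 x = Max.max (φ.1 x) (ψ.1 x) := rfl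

noncomputable def cappedSMul (b : ℝ) (hb : 0 ≤ b) (ψ : CI X) : CI X :=
  ⟨(ContinuousMap.const X b * ψ.1) ⊓ 1, fun x =>
    ⟨le_min (mul_nonneg hb (ψ.2 x).1) zero_le_one, min_le_right _ _⟩⟩

lemma cappedSMul_apply (b : ℝ) (hb : 0 ≤ b) (ψ : CI X) (x : X) :
    (cappedSMul b hb ψ).1 x = Min.min (b * ψ.1 x) 1 := rfl

end CI

instance CI.instNonemptyEqOne (x : X) : Nonempty {φ : CI X // φ.1 x = 1} :=
  ⟨⟨CI.one X, rfl⟩⟩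

lemma s1Fun_le {μ : CI X → ℝ} (hμ : ∀ ψ, 0 ≤ μ ψ) {φ : CI X} {x : X} (hφ : φ.1 x = 1) :
    s1Fun μ x ≤ μ φ :=
  ciInf_le (f := fun ψ : {ψ : CI X // ψ.1 x = 1} => μ ψ.1)
    ⟨0, forall_mem_range.2 fun ψ => hμ ψ.1⟩ ⟨φ, hφ⟩

lemma s1Fun_nonneg {μ : CI X → ℝ} (hμ : ∀ ψ, 0 ≤ μ ψ) (x : X) : 0 ≤ s1Fun μ x :=
  Real.iInf_nonneg fun ψ => hμ ψ.1

namespace IsDotMeasure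

variable {μ : CI X → ℝ}

lemma nonneg (hμ : IsDotMeasure μ) (φ : CI X) : 0 ≤ μ φ := (hμ.1 φ).1

lemma mono (hμ : IsDotMeasure μ) {φ ψ : CI X} (h : ∀ x, φ.1 x ≤ ψ.1 x) : μ φ ≤ μ ψ := by
  have hmax : CI.max φ ψ = ψ := Subtype.ext <| ContinuousMap.ext fun x => max_eq_right (h x)
  have := hμ.2.2.2 φ ψ
  rw [hmax] at this
  exact this ▸ le_max_left _ _

lemma cappedSMul_le (hμ : IsDotMeasure μ) {b : ℝ} (hb : 0 ≤ b) (ψ : CI X) :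
    μ (CI.cappedSMul b hb ψ) ≤ b * μ ψ := by
  rcases le_total b 1 with hb1 | hb1
  · have h : CI.cappedSMul b hb ψ = CI.smul b ⟨hb, hb1⟩ ψ :=
      Subtype.ext <| ContinuousMap.ext fun x =>
        min_eq_left (mul_le_one₀ hb1 (ψ.2 x).1 (ψ.2 x).2)
    rw [h, hμ.2.2.1]
  · have hb0 : 0 < b := zero_lt_one.trans_le hb1
    have hinv : 0 ≤ b⁻¹ ∧ b⁻¹ ≤ 1 := ⟨inv_nonneg.2 hb, inv_le_one_of_one_le₀ hb1⟩
    have h : b⁻¹ * μ (CI.cappedSMul b hb ψ) ≤ μ ψ := by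
      rw [← hμ.2.2.1 _ hinv]
      refine hμ.mono fun x => ?_
      rw [CI.smul_apply, CI.cappedSMul_apply]
      calc b⁻¹ * Min.min (b * ψ.1 x) 1 ≤ b⁻¹ * (b * ψ.1 x) :=
            mul_le_mul_of_nonneg_left (min_le_left _ _) hinv.1
        _ = ψ.1 x := inv_mul_cancel_left₀ hb0.ne' _
    rwa [inv_mul_le_iff₀ hb0] at h

lemma s1Fun_mul_le (hμ : IsDotMeasure μ) (φ : CI X) (x : X) :
    s1Fun μ x * φ.1 x ≤ μ φ := by
  rcases (φ.2 x).1.eq_or_lt with h0 | hpos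
  · rw [← h0, mul_zero]
    exact hμ.nonneg φ
  · have hcap : (CI.cappedSMul (φ.1 x)⁻¹ (inv_nonneg.2 hpos.le) φ).1 x = 1 := by
      rw [CI.cappedSMul_apply, inv_mul_cancel₀ hpos.ne', min_self]
    calc s1Fun μ x * φ.1 x ≤ (φ.1 x)⁻¹ * μ φ * φ.1 x :=
          mul_le_mul_of_nonneg_right
            ((s1Fun_le hμ.nonneg hcap).trans (hμ.cappedSMul_le _ φ)) hpos.le
      _ = μ φ := by field_simp

/- The witness is `min(b·ψ, 1)`, where `ψ(x) = 1` nearly realizes `s1Fun μ x` and `b` slightly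
exceeds `φ(x)`. -/
lemma exists_eventually_le_of_s1Fun_mul_lt (hμ : IsDotMeasure μ) {φ : CI X} {x : X} {r : ℝ}
    (h : s1Fun μ x * φ.1 x < r) :
    ∃ η : CI X, (∀ᶠ y in 𝓝 x, φ.1 y ≤ η.1 y) ∧ μ η < r := by
  rw [s1Fun, Real.iInf_mul_of_nonneg (φ.2 x).1] at h
  obtain ⟨⟨ψ, hψx⟩, hψ⟩ := exists_lt_of_ciInf_lt h
  obtain ⟨m, b, hm, hb, hmb⟩ := exists_gt_gt_mul_lt hψ
  have hb0 : 0 ≤ b := (φ.2 x).1.trans hb.le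
  refine ⟨CI.cappedSMul b hb0 ψ, ?_, ?_⟩
  · have hlt : φ.1 x < b * ψ.1 x := by rwa [hψx, mul_one]
    filter_upwards [(φ.1.continuous.sub (continuous_const.mul ψ.1.continuous)).tendsto x
      |>.eventually_lt_const (sub_neg.2 hlt)] with y hy
    exact le_min (sub_neg.1 hy).le (φ.2 y).2
  · calc μ (CI.cappedSMul b hb0 ψ) ≤ b * μ ψ := hμ.cappedSMul_le hb0 ψ
      _ ≤ m * b := by rw [mul_comm]; exact mul_le_mul_of_nonneg_right hm.le hb0
      _ < r := hmb

lemma upperSemicontinuous_s1Fun (hμ : IsDotMeasure μ) : UpperSemicontinuous (s1Fun μ) := by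
  intro x a ha
  obtain ⟨η, hη, hηa⟩ :=
    hμ.exists_eventually_le_of_s1Fun_mul_lt (φ := CI.one X) (by rwa [CI.one_apply, mul_one])
  filter_upwards [hη] with y hy
  exact (s1Fun_le hμ.nonneg (le_antisymm (η.2 y).2 hy)).trans_lt hηa

lemma le_of_forall_eventually_le [CompactSpace X] (hμ : IsDotMeasure μ) {φ : CI X} {r : ℝ}
    (hr : 0 ≤ r) (h : ∀ x, ∃ η : CI X, (∀ᶠ y in 𝓝 x, φ.1 y ≤ η.1 y) ∧ μ η ≤ r) :
    μ φ ≤ r := by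
  let Dominated (U : Set X) : Prop := ∃ η : CI X, (∀ y ∈ U, φ.1 y ≤ η.1 y) ∧ μ η ≤ r
  have hzero : μ (CI.smul 0 ⟨le_rfl, zero_le_one⟩ φ) ≤ r := by rwa [hμ.2.2.1, zero_mul]
  obtain ⟨η, hφη, hηr⟩ : Dominated univ := isCompact_univ.induction_on
    ⟨_, fun _ h => h.elim, hzero⟩
    (fun _ _ hst ⟨η, hη, hηr⟩ => ⟨η, fun y hy => hη y (hst hy), hηr⟩)
    (fun _ _ ⟨η, hη, hηr⟩ ⟨η', hη', hη'r⟩ => ⟨CI.max η η', fun y hy =>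
      hy.elim (fun hy => (hη y hy).trans (le_max_left _ _))
        (fun hy => (hη' y hy).trans (le_max_right _ _)),
      (hμ.2.2.2 η η').trans_le (max_le hηr hη'r)⟩)
    (fun x _ => by
      obtain ⟨η, hη, hηr⟩ := h x
      exact ⟨_, nhdsWithin_le_nhds hη, η, fun y hy => hy, hηr⟩)
  exact (hμ.mono fun y => hφη y trivial).trans hηr

lemma iSup_s1Fun_mul [CompactSpace X] (hμ : IsDotMeasure μ) (φ : CI X) :
    ⨆ x, s1Fun μ x * φ.1 x = μ φ := by
  have hbdd : BddAbove (range fun x => s1Fun μ x * φ.1 x) :=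
    ⟨μ φ, by rintro _ ⟨x, rfl⟩; exact hμ.s1Fun_mul_le φ x⟩
  refine le_antisymm (Real.iSup_le (hμ.s1Fun_mul_le φ) (hμ.nonneg φ)) ?_
  refine le_of_forall_gt_imp_ge_of_dense fun r hr => hμ.le_of_forall_eventually_le ?_ fun x => ?_
  · exact (Real.iSup_nonneg fun x => mul_nonneg (s1Fun_nonneg hμ.nonneg x) (φ.2 x).1).trans hr.le
  · obtain ⟨η, hη, hηr⟩ := hμ.exists_eventually_le_of_s1Fun_mul_lt ((le_ciSup hbdd x).trans_lt hr)
    exact ⟨η, hη, hηr.le⟩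

lemma memD1_s1Fun [CompactSpace X] (hμ : IsDotMeasure μ) : MemD1 (s1Fun μ) := by
  have hsup : ⨆ x, s1Fun μ x = 1 := by
    simpa only [CI.one_apply, mul_one, hμ.2.1] using hμ.iSup_s1Fun_mul (CI.one X)
  have hne : Nonempty X := by
    by_contra hX
    rw [not_nonempty_iff] at hX
    rw [Real.iSup_of_isEmpty] at hsup
    exact zero_ne_one hsup
  have hle : ∀ x, s1Fun μ x ≤ 1 := fun x => s1Fun_le hμ.nonneg (CI.one_apply x) |>.trans_eq hμ.2.1
  obtain ⟨x₀, -, hx₀⟩ := (hμ.upperSemicontinuous_s1Fun.upperSemicontinuousOn univ).exists_isMaxOn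
    univ_nonempty isCompact_univ
  refine ⟨hμ.upperSemicontinuous_s1Fun, fun x => ⟨s1Fun_nonneg hμ.nonneg x, hle x⟩, x₀, ?_⟩
  exact le_antisymm (hle x₀) (hsup ▸ ciSup_le fun x => hx₀ (mem_univ x))

end IsDotMeasure

noncomputable def n1Fun (f : X → ℝ) (φ : CI X) : ℝ := ⨆ x, f x * φ.1 x

namespace MemD1

variable {f : X → ℝ}

lemma exists_forall_mul_le [CompactSpace X] (hf : MemD1 f) (φ : CI X) :
    ∃ x₀ : X, ∀ x, f x * φ.1 x ≤ f x₀ * φ.1 x₀ := by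
  obtain ⟨husc, h01, x₁, -⟩ := hf
  obtain ⟨x₀, -, hx₀⟩ := (husc.mul_of_nonneg φ.1.continuous.upperSemicontinuous
    (fun x => (h01 x).1) (fun x => (φ.2 x).1)).upperSemicontinuousOn univ |>.exists_isMaxOn
    ⟨x₁, mem_univ _⟩ isCompact_univ
  exact ⟨x₀, fun x => hx₀ (mem_univ x)⟩

lemma bddAbove_mul (hf : MemD1 f) (φ : CI X) : BddAbove (range fun x => f x * φ.1 x) :=
  ⟨1, by rintro _ ⟨x, rfl⟩; exact mul_le_one₀ (hf.2.1 x).2 (φ.2 x).1 (φ.2 x).2⟩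

lemma le_n1Fun (hf : MemD1 f) (φ : CI X) (x : X) : f x * φ.1 x ≤ n1Fun f φ :=
  le_ciSup (hf.bddAbove_mul φ) x

lemma isDotMeasure_n1Fun (hf : MemD1 f) : IsDotMeasure (n1Fun f) := by
  have ⟨_, h01, x₁, hx₁⟩ := hf
  refine ⟨fun φ => ⟨?_, ?_⟩, ?_, fun l hl φ => ?_, fun ψ φ => ?_⟩
  · exact (mul_nonneg (h01 x₁).1 (φ.2 x₁).1).trans (hf.le_n1Fun φ x₁)
  · exact Real.iSup_le (fun x => mul_le_one₀ (h01 x).2 (φ.2 x).1 (φ.2 x).2) zero_le_one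
  · refine le_antisymm (Real.iSup_le (fun x => ?_) zero_le_one) ?_
    · simpa only [CI.one_apply, mul_one] using (h01 x).2
    · simpa only [hx₁, CI.one_apply, mul_one] using hf.le_n1Fun (CI.one X) x₁
  · simp only [n1Fun, CI.smul_apply, Real.mul_iSup_of_nonneg hl.1, mul_left_comm]
  · simp only [n1Fun, CI.max_apply, mul_max_of_nonneg _ _ (h01 _).1]
    exact ciSup_sup_eq (hf.bddAbove_mul ψ) (hf.bddAbove_mul φ)

lemma s1Fun_n1Fun [T4Space X] (hf : MemD1 f) (x : X) : s1Fun (n1Fun f) x = f x := by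
  have ⟨husc, h01, _⟩ := hf
  refine le_antisymm (le_of_forall_gt_imp_ge_of_dense fun a ha => ?_)
    (le_ciInf fun φ => by simpa only [φ.2, mul_one] using hf.le_n1Fun φ.1 x)
  have ha0 : 0 ≤ a := (h01 x).1.trans ha.le
  obtain ⟨g, hg0, hg1, hg01⟩ := exists_continuous_zero_one_of_isClosed
    (husc.isOpen_preimage a).isClosed_compl isClosed_singleton
    (disjoint_singleton_right.2 fun hx => hx ha)
  refine (s1Fun_le hf.isDotMeasure_n1Fun.nonneg (φ := ⟨g, hg01⟩) (hg1 rfl)).trans ?_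
  refine Real.iSup_le (fun y => ?_) ha0
  by_cases hy : f y < a
  · exact (mul_le_of_le_one_right (h01 y).1 (hg01 y).2).trans hy.le
  · simpa only [hg0 hy, Pi.zero_apply, mul_zero] using ha0

end MemD1

end

/-- For a compactum `X`, the maps
`n₁X(f)(φ) = max{f(x)·φ(x) : x ∈ X}` and
`s₁X(μ)(x) = inf{μ(φ) : φ ∈ C(X,[0,1]), φ(x) = 1}` are well defined
(`n₁X(f)` is a `·`-measure for `f ∈ D₁X`, the maximum being attained, and
`s₁X(μ) ∈ D₁X` for every `·`-measure `μ`) and mutually inverse. -/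
theorem stmt4 {X : Type*} [TopologicalSpace X] [CompactSpace X] [T2Space X] :
    (∀ f : X → ℝ, MemD1 f →
        (∀ φ : CI X, ∃ x₀ : X, ∀ x, f x * φ.1 x ≤ f x₀ * φ.1 x₀) ∧
        IsDotMeasure (fun φ : CI X => ⨆ x, f x * φ.1 x)) ∧
    (∀ μ : CI X → ℝ, IsDotMeasure μ → MemD1 (s1Fun μ)) ∧
    (∀ μ : CI X → ℝ, IsDotMeasure μ →
        ∀ φ : CI X, (⨆ x, s1Fun μ x * φ.1 x) = μ φ) ∧
    (∀ f : X → ℝ, MemD1 f →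
        ∀ x : X, s1Fun (fun φ : CI X => ⨆ y, f y * φ.1 y) x = f x) :=
  ⟨fun _ hf => ⟨hf.exists_forall_mul_le, hf.isDotMeasure_n1Fun⟩,
    fun _ hμ => hμ.memD1_s1Fun,
    fun _ hμ => hμ.iSup_s1Fun_mul,
    fun _ hf => hf.s1Fun_n1Fun⟩
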